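/- arXiv:2502.16649 — 4 statements merged into one kernel-verified Lean document; each statement's English description precedes it below -/
import Mathlib

section
/- Let φ : (−1,1) → ℝ be continuous, strictly increasing and surjective onto ℝ with φ(0) = 0, and set Φ(z) = ∫₀ᶻ φ(s) ds. Then Φ(z) ≥ 0 for all z ∈ (−1,1), and for every δ > 0, letting b₊, b₋ ∈ (−1,1) be the unique points with φ(b₊) = 1/δ and φ(b₋) = −1/δ, one has |z| ≤ δ·Φ(z) + max(b₊, −b₋) for every z ∈ (−1,1). -/
/-!
On `[0, z]` the function `φ` is nonnegative, and beyond `b₊` it is at least `1/δ`, so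
`δ Φ(z) ≥ δ ∫_{b₊}^{z} φ ≥ z - b₊` whenever `z > b₊`. The case `z < 0` is the same argument
applied to the reflection `x ↦ -φ(-x)`, which has the same energy at `-z`.
-/

open Set intervalIntegral

namespace Energy

variable {φ : ℝ → ℝ} {a b z δ : ℝ}

theorem integral_nonneg_of_monotoneOn_Icc (hz : 0 ≤ z) (hmono : MonotoneOn φ (Icc 0 z))
    (h0 : 0 ≤ φ 0) : 0 ≤ ∫ s in (0 : ℝ)..z, φ s :=
  integral_nonneg hz fun _ hu => h0.trans (hmono ⟨le_rfl, hz⟩ hu hu.1)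

theorem sub_mul_le_integral_of_monotoneOn (hab : a ≤ b) (hmono : MonotoneOn φ (Icc a b)) :
    (b - a) * φ a ≤ ∫ s in a..b, φ s := by
  have hint : IntervalIntegrable φ MeasureTheory.volume a b :=
    MonotoneOn.intervalIntegrable (by rwa [uIcc_of_le hab])
  calc (b - a) * φ a = ∫ _ in a..b, φ a := by simp
    _ ≤ ∫ s in a..b, φ s :=
      integral_mono_on hab intervalIntegrable_const hint
        fun _ hu => hmono ⟨le_rfl, hab⟩ hu hu.1

theorem le_mul_integral_add_of_monotoneOn (hz : 0 ≤ z) (hmono : MonotoneOn φ (Icc 0 z))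
    (h0 : 0 ≤ φ 0) (hδ : 0 ≤ δ) (hb : 0 ≤ b) (hφb : 1 ≤ δ * φ b) :
    z ≤ δ * (∫ s in (0 : ℝ)..z, φ s) + b := by
  rcases le_or_gt z b with hzb | hbz
  · exact le_add_of_nonneg_of_le (mul_nonneg hδ (integral_nonneg_of_monotoneOn_Icc hz hmono h0))
      hzb
  have hmono₁ : MonotoneOn φ (Icc 0 b) := hmono.mono (Icc_subset_Icc le_rfl hbz.le)
  have hmono₂ : MonotoneOn φ (Icc b z) := hmono.mono (Icc_subset_Icc hb le_rfl)
  have hsplit : (∫ s in (0 : ℝ)..b, φ s) + (∫ s in b..z, φ s) = ∫ s in (0 : ℝ)..z, φ s :=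
    integral_add_adjacent_intervals
      (MonotoneOn.intervalIntegrable (by rwa [uIcc_of_le hb]))
      (MonotoneOn.intervalIntegrable (by rwa [uIcc_of_le hbz.le]))
  have hhead := integral_nonneg_of_monotoneOn_Icc hb hmono₁ h0
  have htail := sub_mul_le_integral_of_monotoneOn hbz.le hmono₂
  calc z = (z - b) * 1 + b := by ring
    _ ≤ (z - b) * (δ * φ b) + b := by gcongr
    _ = δ * ((z - b) * φ b) + b := by ring
    _ ≤ δ * (∫ s in (0 : ℝ)..z, φ s) + b := by gcongr; linarith

theorem monotoneOn_neg_comp_neg_Icc (hmono : MonotoneOn φ (Icc a b)) :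
    MonotoneOn (fun x => -φ (-x)) (Icc (-b) (-a)) := fun _ hx _ hy hxy =>
  neg_le_neg <| hmono ⟨le_neg.1 hy.2, neg_le.1 hy.1⟩ ⟨le_neg.1 hx.2, neg_le.1 hx.1⟩
    (neg_le_neg hxy)

theorem integral_neg_comp_neg (a b : ℝ) :
    ∫ x in a..b, -φ (-x) = ∫ x in -a..-b, φ x := by
  rw [intervalIntegral.integral_neg, integral_comp_neg, integral_symm, neg_neg]

theorem integral_nonneg_of_monotoneOn (hmono : MonotoneOn φ (uIcc 0 z)) (h0 : φ 0 = 0) :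
    0 ≤ ∫ s in (0 : ℝ)..z, φ s := by
  rcases le_or_gt 0 z with hz | hz
  · exact integral_nonneg_of_monotoneOn_Icc hz (by rwa [uIcc_of_le hz] at hmono) h0.ge
  · rw [uIcc_of_ge hz.le] at hmono
    have hrefl := monotoneOn_neg_comp_neg_Icc hmono
    rw [neg_zero] at hrefl
    have hreflect := integral_nonneg_of_monotoneOn_Icc (neg_nonneg.2 hz.le) hrefl (by simp [h0])
    rwa [integral_neg_comp_neg, neg_zero, neg_neg] at hreflect

theorem abs_le_mul_integral_add_max (hmono : MonotoneOn φ (uIcc 0 z)) (h0 : φ 0 = 0)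
    (hδ : 0 ≤ δ) {bp bm : ℝ} (hbp : 0 ≤ bp) (hbm : bm ≤ 0) (hφp : 1 ≤ δ * φ bp)
    (hφm : δ * φ bm ≤ -1) :
    |z| ≤ δ * (∫ s in (0 : ℝ)..z, φ s) + max bp (-bm) := by
  rcases le_or_gt 0 z with hz | hz
  · rw [abs_of_nonneg hz]
    refine (le_mul_integral_add_of_monotoneOn hz ?_ h0.ge hδ hbp hφp).trans ?_
    · rwa [uIcc_of_le hz] at hmono
    · gcongr; exact le_max_left _ _
  · rw [uIcc_of_ge hz.le] at hmono
    have hrefl := monotoneOn_neg_comp_neg_Icc hmono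
    rw [neg_zero] at hrefl
    have hreflect := le_mul_integral_add_of_monotoneOn (neg_nonneg.2 hz.le) hrefl (by simp [h0])
      hδ (neg_nonneg.2 hbm) (b := -bm) (by simp only [neg_neg, mul_neg]; linarith)
    rw [integral_neg_comp_neg, neg_zero, neg_neg] at hreflect
    rw [abs_of_neg hz]
    exact hreflect.trans (by gcongr; exact le_max_right _ _)

end Energy

open Energy in
theorem stmt_1_general (φ : ℝ → ℝ)
    (hm : StrictMonoOn φ (Set.Ioo (-1 : ℝ) 1))
    (h0 : φ 0 = 0) :
    (∀ z ∈ Set.Ioo (-1 : ℝ) 1, 0 ≤ ∫ s in (0 : ℝ)..z, φ s) ∧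
    ∀ δ : ℝ, 0 < δ →
      ∀ bp ∈ Set.Ioo (-1 : ℝ) 1, ∀ bm ∈ Set.Ioo (-1 : ℝ) 1,
        φ bp = 1 / δ → φ bm = -(1 / δ) →
        ∀ z ∈ Set.Ioo (-1 : ℝ) 1,
          |z| ≤ δ * (∫ s in (0 : ℝ)..z, φ s) + max bp (-bm) := by
  have h0mem : (0 : ℝ) ∈ Ioo (-1 : ℝ) 1 := by norm_num
  have hmono : ∀ z ∈ Ioo (-1 : ℝ) 1, MonotoneOn φ (uIcc 0 z) := fun z hz =>
    hm.monotoneOn.mono (ordConnected_Ioo.uIcc_subset h0mem hz)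
  refine ⟨fun z hz => integral_nonneg_of_monotoneOn (hmono z hz) h0, ?_⟩
  intro δ hδ bp hbp bm hbm hφp hφm z hz
  have hbp0 : 0 ≤ bp := by
    by_contra! hneg
    have hle := hm.monotoneOn hbp h0mem hneg.le
    rw [hφp, h0] at hle
    exact (one_div_pos.2 hδ).not_ge hle
  have hbm0 : bm ≤ 0 := by
    by_contra! hpos
    have hle := hm.monotoneOn h0mem hbm hpos.le
    rw [hφm, h0] at hle
    exact (one_div_pos.2 hδ).not_ge (neg_nonneg.1 hle)
  exact abs_le_mul_integral_add_max (hmono z hz) h0 hδ.le hbp0 hbm0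
    (by rw [hφp, mul_one_div_cancel hδ.ne']) (by rw [hφm, mul_neg, mul_one_div_cancel hδ.ne'])

/-- **Bounding `|z|` by the energy `Φ(z)` (Remark 2.4).**
Let `φ : (−1,1) → ℝ` be continuous, strictly increasing and surjective onto `ℝ` with
`φ 0 = 0`, and set `Φ z = ∫ s in 0..z, φ s`. Then `Φ z ≥ 0` on `(−1,1)`, and for every
`δ > 0`, if `b₊, b₋ ∈ (−1,1)` are the (unique) points with `φ b₊ = 1/δ` and
`φ b₋ = −1/δ`, then `|z| ≤ δ * Φ z + max b₊ (−b₋)` for all `z ∈ (−1,1)`. -/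
theorem stmt_1 (φ : ℝ → ℝ)
    (hc : ContinuousOn φ (Set.Ioo (-1 : ℝ) 1))
    (hm : StrictMonoOn φ (Set.Ioo (-1 : ℝ) 1))
    (hsurj : ∀ c : ℝ, ∃ b ∈ Set.Ioo (-1 : ℝ) 1, φ b = c)
    (h0 : φ 0 = 0) :
    (∀ z ∈ Set.Ioo (-1 : ℝ) 1, 0 ≤ ∫ s in (0 : ℝ)..z, φ s) ∧
    ∀ δ : ℝ, 0 < δ →
      ∀ bp ∈ Set.Ioo (-1 : ℝ) 1, ∀ bm ∈ Set.Ioo (-1 : ℝ) 1,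
        φ bp = 1 / δ → φ bm = -(1 / δ) →
        ∀ z ∈ Set.Ioo (-1 : ℝ) 1,
          |z| ≤ δ * (∫ s in (0 : ℝ)..z, φ s) + max bp (-bm) :=
  stmt_1_general φ hm h0
end

section
/- Let (Ω, μ) be a finite measure space with 0 < μ(Ω) < ∞, and let φ : [0,1) → ℝ be continuous, convex, monotone increasing with φ(0) = 0. Let w₁, w₂ : Ω → [0,1) be measurable functions such that φ∘w₁ and φ∘w₂ are μ-integrable. Then the average ⨍_Ω |w₁ − w₂| dμ lies in [0,1) and φ(⨍_Ω |w₁ − w₂| dμ) ≤ ⨍_Ω |φ(w₁) − φ(w₂)| dμ, where ⨍_Ω f dμ = (1/μ(Ω)) ∫_Ω f dμ denotes the averaged integral. -/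
/-!
For `0 ≤ b ≤ a < 1`, the points `a - b` and `b` lie between `0` and `a` and have the same sum,
so convexity and `φ 0 = 0` give `φ (a - b) + φ b ≤ φ a`; hence `φ |w₁ - w₂| ≤ |φ w₁ - φ w₂|`
pointwise. The average `m` of `|w₁ - w₂|` lies between two of its values, so `m ∈ [0, 1)`.
Jensen's inequality `φ m ≤ ⨍ φ |w₁ - w₂|` then follows by integrating a supporting line of `φ`
at `m` when `0 < m` (the domain `[0, 1)` is not closed, so Mathlib's version does not apply), and
from `φ ≥ 0` when `m = 0`.
-/

open MeasureTheory Set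

namespace ConvexOn

variable {S : Set ℝ} {f : ℝ → ℝ}

theorem map_add_map_le {p q x y : ℝ} (hf : ConvexOn ℝ S f) (hp : p ∈ S) (hq : q ∈ S)
    (hx : x ∈ Icc p q) (hxy : x + y = p + q) : f x + f y ≤ f p + f q := by
  rcases hx.1.eq_or_lt with rfl | hpx
  · obtain rfl : y = q := by linarith
    rfl
  set t := (x - p) / (q - p)
  have hpq : 0 < q - p := by linarith [hx.2]
  have ht0 : 0 ≤ t := div_nonneg (by linarith) hpq.le
  have ht1 : t ≤ 1 := div_le_one_of_le₀ (by linarith [hx.2]) hpq.le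
  have htpq : t * (q - p) = x - p := div_mul_cancel₀ _ hpq.ne'
  have hx' : (1 - t) • p + t • q = x := by simp only [smul_eq_mul]; linear_combination htpq
  have hy' : t • p + (1 - t) • q = y := by simp only [smul_eq_mul]; linear_combination -hxy - htpq
  have h₁ := hf.2 hp hq (sub_nonneg.2 ht1) ht0 (by ring)
  have h₂ := hf.2 hp hq ht0 (sub_nonneg.2 ht1) (by ring)
  rw [hx'] at h₁
  rw [hy'] at h₂
  simp only [smul_eq_mul] at h₁ h₂
  linarith

theorem add_rightDeriv_mul_sub_le {x y : ℝ} (hf : ConvexOn ℝ S f) (hx : x ∈ interior S)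
    (hy : y ∈ S) : f x + derivWithin f (Ioi x) x * (y - x) ≤ f y := by
  rcases lt_trichotomy y x with hyx | rfl | hxy
  · have h := (hf.slope_le_leftDeriv_of_mem_interior hy hx hyx).trans
      (hf.leftDeriv_le_rightDeriv_of_mem_interior hx)
    rw [slope_def_field, div_le_iff₀ (by linarith)] at h
    nlinarith
  · simp
  · have h := hf.rightDeriv_le_slope_of_mem_interior hx hy hxy
    rw [slope_def_field, le_div_iff₀ (by linarith)] at h
    nlinarith

theorem map_abs_sub_le_abs_sub {a b : ℝ} (hf : ConvexOn ℝ S f) (h0 : f 0 = 0) (hS : 0 ∈ S)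
    (ha : a ∈ S) (hb : b ∈ S) (ha0 : 0 ≤ a) (hb0 : 0 ≤ b) : f |a - b| ≤ |f a - f b| := by
  wlog hba : b ≤ a generalizing a b
  · rw [abs_sub_comm, abs_sub_comm (f a)]
    exact this hb ha hb0 ha0 (le_of_not_ge hba)
  have h := hf.map_add_map_le hS ha (x := a - b) (y := b) ⟨by linarith, by linarith⟩ (by ring)
  rw [abs_of_nonneg (sub_nonneg.2 hba)]
  linarith [le_abs_self (f a - f b)]

end ConvexOn

section Average

variable {α : Type*} [MeasurableSpace α] {μ : Measure α}

theorem Set.OrdConnected.average_mem [IsFiniteMeasure μ] {s : Set ℝ} {f : α → ℝ}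
    (hs : s.OrdConnected) (hμ : μ ≠ 0) (hfs : ∀ a, f a ∈ s) (hfi : Integrable f μ) :
    ⨍ a, f a ∂μ ∈ s := by
  obtain ⟨a, ha⟩ := exists_le_average hμ hfi
  obtain ⟨b, hb⟩ := exists_average_le hμ hfi
  exact hs.out (hfs a) (hfs b) ⟨ha, hb⟩

theorem average_mono {f g : α → ℝ} (hf : Integrable f μ) (hg : Integrable g μ) (hfg : f ≤ g) :
    ⨍ a, f a ∂μ ≤ ⨍ a, g a ∂μ := by
  simp only [average_eq, smul_eq_mul]
  exact mul_le_mul_of_nonneg_left (integral_mono hf hg hfg) (by positivity)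

theorem ConvexOn.map_integral_le_of_integral_mem_interior [IsProbabilityMeasure μ] {S : Set ℝ}
    {g : ℝ → ℝ} {f : α → ℝ} (hg : ConvexOn ℝ S g) (hfS : ∀ᵐ a ∂μ, f a ∈ S)
    (hfi : Integrable f μ) (hgi : Integrable (g ∘ f) μ) (hm : ∫ a, f a ∂μ ∈ interior S) :
    g (∫ a, f a ∂μ) ≤ ∫ a, g (f a) ∂μ := by
  set m := ∫ a, f a ∂μ
  set c := derivWithin g (Ioi m) m
  have hdev : Integrable (fun a => c * (f a - m)) μ := (hfi.sub (integrable_const m)).const_mul c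
  calc g m = ∫ a, (g m + c * (f a - m)) ∂μ := by
        rw [integral_add (integrable_const _) hdev, integral_const_mul,
          integral_sub hfi (integrable_const m)]
        simp [m]
    _ ≤ ∫ a, g (f a) ∂μ :=
        integral_mono_ae ((integrable_const _).add hdev) hgi
          (hfS.mono fun a ha => hg.add_rightDeriv_mul_sub_le hm ha)

theorem ConvexOn.map_average_le_of_average_mem_interior [IsFiniteMeasure μ] [NeZero μ]
    {S : Set ℝ} {g : ℝ → ℝ} {f : α → ℝ} (hg : ConvexOn ℝ S g) (hfS : ∀ᵐ a ∂μ, f a ∈ S)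
    (hfi : Integrable f μ) (hgi : Integrable (g ∘ f) μ) (hm : ⨍ a, f a ∂μ ∈ interior S) :
    g (⨍ a, f a ∂μ) ≤ ⨍ a, g (f a) ∂μ := by
  simp only [average_eq'] at hm ⊢
  exact hg.map_integral_le_of_integral_mem_interior
    (Measure.ae_mono' Measure.smul_absolutelyContinuous hfS) hfi.to_average hgi.to_average hm

theorem ContinuousOn.measurable_comp {X Y : Type*} [TopologicalSpace X] [MeasurableSpace X]
    [OpensMeasurableSpace X] [TopologicalSpace Y] [MeasurableSpace Y] [BorelSpace Y]
    {s : Set X} {g : X → Y} {f : α → X} (hg : ContinuousOn g s) (hf : Measurable f)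
    (hfs : ∀ a, f a ∈ s) : Measurable fun a => g (f a) :=
  hg.domRestrict.measurable.comp (hf.subtype_mk (h := hfs))

end Average

/-- **Jensen-type inequality for the averaged integral (key step in Theorem 3.4).**
Let `(Ω, μ)` be a finite measure space with `0 < μ(Ω) < ∞` and let `φ : [0,1) → ℝ` be
continuous, convex and monotone increasing on `[0,1)` with `φ 0 = 0`. If
`w₁, w₂ : Ω → [0,1)` are measurable with `φ ∘ w₁` and `φ ∘ w₂` integrable, then the
average `⨍ |w₁ − w₂| dμ` lies in `[0,1)` and
`φ (⨍ |w₁ − w₂| dμ) ≤ ⨍ |φ(w₁) − φ(w₂)| dμ`. -/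
theorem stmt_4 {Ω : Type*} [MeasurableSpace Ω] (μ : Measure Ω)
    [IsFiniteMeasure μ] (hpos : 0 < μ Set.univ)
    (φ : ℝ → ℝ)
    (hφc : ContinuousOn φ (Set.Ico (0 : ℝ) 1))
    (hconv : ConvexOn ℝ (Set.Ico (0 : ℝ) 1) φ)
    (hmono : MonotoneOn φ (Set.Ico (0 : ℝ) 1))
    (h0 : φ 0 = 0)
    (w₁ w₂ : Ω → ℝ) (hm₁ : Measurable w₁) (hm₂ : Measurable w₂)
    (hr₁ : ∀ x, w₁ x ∈ Set.Ico (0 : ℝ) 1) (hr₂ : ∀ x, w₂ x ∈ Set.Ico (0 : ℝ) 1)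
    (hi₁ : Integrable (fun x => φ (w₁ x)) μ)
    (hi₂ : Integrable (fun x => φ (w₂ x)) μ) :
    (⨍ x, |w₁ x - w₂ x| ∂μ) ∈ Set.Ico (0 : ℝ) 1 ∧
      φ (⨍ x, |w₁ x - w₂ x| ∂μ) ≤ ⨍ x, |φ (w₁ x) - φ (w₂ x)| ∂μ := by
  have : NeZero μ := ⟨Measure.measure_univ_ne_zero.mp hpos.ne'⟩
  set g := fun x => |w₁ x - w₂ x|
  have hg : ∀ x, g x ∈ Ico 0 1 := fun x =>
    ⟨abs_nonneg _, abs_sub_lt_iff.2 ⟨by linarith [(hr₁ x).2, (hr₂ x).1],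
      by linarith [(hr₁ x).1, (hr₂ x).2]⟩⟩
  have hgm : Measurable g := (hm₁.sub hm₂).abs
  have hgi : Integrable g μ := (integrable_const (1 : ℝ)).mono' hgm.aestronglyMeasurable
    (ae_of_all _ fun x => by rw [Real.norm_of_nonneg (hg x).1]; exact (hg x).2.le)
  have hm : ⨍ x, g x ∂μ ∈ Ico 0 1 := ordConnected_Ico.average_mem (NeZero.ne μ) hg hgi
  refine ⟨hm, ?_⟩
  have hφg_nonneg : ∀ x, 0 ≤ φ (g x) := fun x =>
    h0 ▸ hmono (left_mem_Ico.2 one_pos) (hg x) (hg x).1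
  have hsuper : ∀ x, φ (g x) ≤ |φ (w₁ x) - φ (w₂ x)| := fun x =>
    hconv.map_abs_sub_le_abs_sub h0 (left_mem_Ico.2 one_pos) (hr₁ x) (hr₂ x) (hr₁ x).1 (hr₂ x).1
  have hdi : Integrable (fun x => |φ (w₁ x) - φ (w₂ x)|) μ := (hi₁.sub hi₂).abs
  have hφgi : Integrable (fun x => φ (g x)) μ :=
    hdi.mono' (hφc.measurable_comp hgm hg).aestronglyMeasurable
      (ae_of_all _ fun x => by rw [Real.norm_of_nonneg (hφg_nonneg x)]; exact hsuper x)
  calc φ (⨍ x, g x ∂μ) ≤ ⨍ x, φ (g x) ∂μ := by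
        rcases hm.1.eq_or_lt with h | h
        · obtain ⟨x, hx⟩ := exists_le_average (NeZero.ne μ) hφgi
          rw [← h, h0]
          exact (hφg_nonneg x).trans hx
        · exact hconv.map_average_le_of_average_mem_interior (ae_of_all _ hg) hgi hφgi
            (by rw [interior_Ico]; exact ⟨h, hm.2⟩)
    _ ≤ ⨍ x, |φ (w₁ x) - φ (w₂ x)| ∂μ := average_mono hφgi hdi hsuper
end

section
/- Let N ∈ ℕ, C₁, C₂ ≥ 0, and let g : (0,∞) → [0,∞) be continuous with ∫₀¹ s^N·g(s) ds ≤ C₁ and g(t) ≤ C₂·(g(s) + 1) for all 0 < s ≤ t. Then there exists a constant C₃ ≥ 0, depending only on N, C₁ and C₂, such that g(t) ≤ C₃·(t^{−(N+1)} + 1) for all t > 0. -/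
/-! The integral bound forces `g` to be small, of size `t^{-(N+1)}`, somewhere in `(t/2, t]`
(first moment method on the dyadic interval), and the propagation estimate carries this bound
forward to time `t`. For `t > 1` one propagates from a point of `(1/2, 1]` instead. -/

open MeasureTheory Set

theorem exists_mem_Ioc_le_setIntegral_div {f : ℝ → ℝ} {a b : ℝ} (hab : a < b)
    (hf : IntegrableOn f (Ioc a b)) :
    ∃ x ∈ Ioc a b, f x ≤ (∫ x in Ioc a b, f x) / (b - a) := by
  have hvol : volume.real (Ioc a b) = b - a := by simp [hab.le]
  obtain ⟨x, hx, hle⟩ := exists_le_setAverage (by simp [hab]) (by simp) hf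
  refine ⟨x, hx, ?_⟩
  rwa [setAverage_eq, hvol, smul_eq_mul, inv_mul_eq_div] at hle

theorem exists_mem_Ioc_half_le_of_setIntegral_pow_mul_le {N : ℕ} {C : ℝ} {g : ℝ → ℝ}
    (hg : ∀ s ∈ Ioi (0 : ℝ), 0 ≤ g s)
    (hint : IntegrableOn (fun s => s ^ N * g s) (Ioc 0 1))
    (hI : ∫ s in Ioc (0 : ℝ) 1, s ^ N * g s ≤ C) {t : ℝ} (ht : 0 < t) (ht1 : t ≤ 1) :
    ∃ s ∈ Ioc (t / 2) t, g s ≤ 2 ^ (N + 1) * C / t ^ (N + 1) := by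
  have hsub : Ioc (t / 2) t ⊆ Ioc 0 1 := Ioc_subset_Ioc (by positivity) ht1
  obtain ⟨s, hs, hle⟩ := exists_mem_Ioc_le_setIntegral_div (by linarith) (hint.mono_set hsub)
  have hs0 : 0 < s := (half_pos ht).trans hs.1
  have hI' : ∫ x in Ioc (t / 2) t, x ^ N * g x ≤ C :=
    (setIntegral_mono_set hint
      (ae_restrict_of_forall_mem measurableSet_Ioc fun x hx => mul_nonneg
        (pow_nonneg hx.1.le N) (hg x hx.1))
      (Filter.Eventually.of_forall hsub)).trans hI
  have hmean : s ^ N * g s ≤ 2 * C / t := by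
    calc s ^ N * g s ≤ (∫ x in Ioc (t / 2) t, x ^ N * g x) / (t - t / 2) := hle
      _ ≤ C / (t - t / 2) := by gcongr; linarith
      _ = 2 * C / t := by field_simp; ring
  have hC : 0 ≤ 2 * C / t := (mul_nonneg (pow_nonneg hs0.le N) (hg s hs0)).trans hmean
  refine ⟨s, hs, ?_⟩
  calc g s ≤ 2 * C / t / s ^ N := by rw [le_div_iff₀' (by positivity)]; exact hmean
    _ ≤ 2 * C / t / (t / 2) ^ N := by gcongr; exact hs.1.le
    _ = 2 ^ (N + 1) * C / t ^ (N + 1) := by rw [div_pow, pow_succ, pow_succ]; field_simp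

theorem stmt_10_general (N : ℕ) (C₁ C₂ : ℝ) (hC₁ : 0 ≤ C₁) (hC₂ : 0 ≤ C₂)
    (g : ℝ → ℝ)
    (hgpos : ∀ t ∈ Set.Ioi (0 : ℝ), 0 ≤ g t)
    (hgint : MeasureTheory.IntegrableOn (fun s => s ^ N * g s) (Set.Ioc (0 : ℝ) 1))
    (hgI : ∫ s in Set.Ioc (0 : ℝ) 1, s ^ N * g s ≤ C₁)
    (hprop : ∀ s t : ℝ, 0 < s → s ≤ t → g t ≤ C₂ * (g s + 1)) :
    ∃ C₃ : ℝ, 0 ≤ C₃ ∧ ∀ t ∈ Set.Ioi (0 : ℝ), g t ≤ C₃ * ((t ^ (N + 1))⁻¹ + 1) := by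
  set A : ℝ := 2 ^ (N + 1) * C₁
  refine ⟨C₂ * (A + 1), by positivity, fun t (ht : 0 < t) => ?_⟩
  obtain ⟨s, ⟨hs0, hst⟩, hgs⟩ := exists_mem_Ioc_half_le_of_setIntegral_pow_mul_le hgpos hgint
    hgI (lt_min ht one_pos) (min_le_right t 1)
  have hmin : (min t 1 ^ (N + 1))⁻¹ ≤ (t ^ (N + 1))⁻¹ + 1 := by
    rcases min_cases t 1 with ⟨h, -⟩ | ⟨h, -⟩ <;> rw [h] <;> simp [ht.le]
  have hu : 0 ≤ (t ^ (N + 1))⁻¹ := by positivity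
  calc g t ≤ C₂ * (g s + 1) :=
        hprop s t ((half_pos (lt_min ht one_pos)).trans hs0) (hst.trans (min_le_left t 1))
    _ ≤ C₂ * (A * (min t 1 ^ (N + 1))⁻¹ + 1) := by rw [← div_eq_mul_inv]; gcongr
    _ ≤ C₂ * (A * ((t ^ (N + 1))⁻¹ + 1) + 1) := by gcongr
    _ ≤ C₂ * (A + 1) * ((t ^ (N + 1))⁻¹ + 1) := by
      rw [mul_assoc C₂, add_one_mul A]; gcongr; linarith

/-- **Pigeonhole/propagation smoothing estimate (proof of Lemma 3.3).**
Let `N ∈ ℕ`, `C₁, C₂ ≥ 0` and `g : (0,∞) → [0,∞)` continuous with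
`∫₀¹ s^N g(s) ds ≤ C₁` and `g(t) ≤ C₂ (g(s) + 1)` for all `0 < s ≤ t`. Then there is a
constant `C₃ ≥ 0`, depending only on `N, C₁, C₂`, with
`g(t) ≤ C₃ (t^{−(N+1)} + 1)` for all `t > 0`. -/
theorem stmt_10 (N : ℕ) (C₁ C₂ : ℝ) (hC₁ : 0 ≤ C₁) (hC₂ : 0 ≤ C₂)
    (g : ℝ → ℝ) (hgc : ContinuousOn g (Set.Ioi (0 : ℝ)))
    (hgpos : ∀ t ∈ Set.Ioi (0 : ℝ), 0 ≤ g t)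
    (hgint : MeasureTheory.IntegrableOn (fun s => s ^ N * g s) (Set.Ioc (0 : ℝ) 1))
    (hgI : ∫ s in Set.Ioc (0 : ℝ) 1, s ^ N * g s ≤ C₁)
    (hprop : ∀ s t : ℝ, 0 < s → s ≤ t → g t ≤ C₂ * (g s + 1)) :
    ∃ C₃ : ℝ, 0 ≤ C₃ ∧ ∀ t ∈ Set.Ioi (0 : ℝ), g t ≤ C₃ * ((t ^ (N + 1))⁻¹ + 1) :=
  stmt_10_general N C₁ C₂ hC₁ hC₂ g hgpos hgint hgI hprop
end

section
/- Let (E, d) be a metric space, A ⊆ E a totally bounded set, T > 0, α ∈ (0,1], M ≥ 0, L ≥ 0, and let S : [0,T] × E → E satisfy d(S(t,x), S(s,x)) ≤ M·|t − s|^α for all t, s ∈ [0,T] and x ∈ A, and d(S(t,x), S(t,y)) ≤ L·d(x,y) for all t ∈ [0,T] and x, y ∈ A. Then the set B = {S(t,x) : t ∈ [0,T], x ∈ A} is totally bounded and its fractal dimension satisfies dim_f^E(B) ≤ 1/α + dim_f^E(A). -/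
open Set Metric Filter ENNReal

/-- The covering number `N_ε(M)`: the minimal number of balls of radius `ε` with
centers in `M` needed to cover `M` (with value `⊤` if no finite cover exists). -/
noncomputable def coveringNumber {Y : Type*} [PseudoMetricSpace Y] (B : Set Y) (ρ : ℝ) : ℕ∞ :=
  sInf {n : ℕ∞ | ∃ C : Set Y, C ⊆ B ∧ C.encard ≤ n ∧ B ⊆ ⋃ c ∈ C, Metric.ball c ρ}

/-- The fractal (box-counting) dimension
`dim_f(M) = limsup_{ε → 0⁺} log N_ε(M) / log (1/ε)`. -/
noncomputable def fractalDim {E : Type*} [PseudoMetricSpace E] (M : Set E) : ℝ≥0∞ :=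
  Filter.limsup
    (fun ε : ℝ => ENNReal.ofReal (Real.log ((coveringNumber M ε).toNat) / Real.log (1 / ε)))
    (nhdsWithin 0 (Set.Ioi 0))

/-!
Discretize time with step `s = (ε / (2 (M + 1))) ^ (1 / α)` and space with radius
`δ = c ε`, `c = 1 / (2 (L + 1))`: by the triangle inequality through `S τ x`, the images of a
`δ`-cover of `A` at the `⌊T / s⌋ + 1` grid times `τ = i s` form an `ε`-cover of `B`. Hence
`N_ε(B) ≤ C ε^(-1/α) N_{cε}(A)`; take logarithms and divide by `log (1 / ε)`. Rescaling the
radius by the constant `c` does not change the limsup, because `log (1 / (c ε)) ~ log (1 / ε)`.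
-/

open Topology

section CoveringNumber

variable {X Y : Type*} [PseudoMetricSpace X] [PseudoMetricSpace Y]

lemma coveringNumber_le_encard {B C : Set Y} {ρ : ℝ} (hCB : C ⊆ B)
    (hcov : B ⊆ ⋃ c ∈ C, ball c ρ) : coveringNumber B ρ ≤ C.encard :=
  sInf_le ⟨C, hCB, le_rfl, hcov⟩

/-- If no finite cover exists, `B` itself serves as the cover. -/
lemma exists_cover_encard_le_coveringNumber (B : Set Y) {ρ : ℝ} (hρ : 0 < ρ) :
    ∃ C ⊆ B, C.encard ≤ coveringNumber B ρ ∧ B ⊆ ⋃ c ∈ C, ball c ρ := by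
  have hself : B ⊆ ⋃ c ∈ B, ball c ρ := fun b hb => mem_biUnion hb (mem_ball_self hρ)
  have hne : {n : ℕ∞ | ∃ C : Set Y, C ⊆ B ∧ C.encard ≤ n ∧ B ⊆ ⋃ c ∈ C, ball c ρ}.Nonempty :=
    ⟨_, B, subset_rfl, le_rfl, hself⟩
  exact csInf_mem hne

lemma TotallyBounded.coveringNumber_ne_top {A : Set Y} (hA : TotallyBounded A) {ρ : ℝ}
    (hρ : 0 < ρ) : coveringNumber A ρ ≠ ⊤ := by
  obtain ⟨C, hCA, hCfin, hcov⟩ := finite_approx_of_totallyBounded hA ρ hρ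
  exact ne_top_of_le_ne_top hCfin.encard_lt_top.ne (coveringNumber_le_encard hCA hcov)

lemma totallyBounded_of_coveringNumber_ne_top {B : Set Y}
    (h : ∀ ρ > 0, coveringNumber B ρ ≠ ⊤) : TotallyBounded B := by
  refine Metric.totallyBounded_iff.2 fun ρ hρ => ?_
  obtain ⟨C, -, hC, hcov⟩ := exists_cover_encard_le_coveringNumber B hρ
  exact ⟨C, encard_lt_top_iff.1 (hC.trans_lt (h ρ hρ).lt_top), hcov⟩

lemma coveringNumber_biUnion_image_le {ι : Type*} {I : Set ι} {A C : Set X} {S : ι → X → Y}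
    {Θ : Finset ι} {δ ε : ℝ} (hΘI : ↑Θ ⊆ I) (hCA : C ⊆ A) (hC : A ⊆ ⋃ c ∈ C, ball c δ)
    (happrox : ∀ t ∈ I, ∀ x ∈ A, ∀ y ∈ A, dist x y < δ → ∃ τ ∈ Θ, dist (S t x) (S τ y) < ε) :
    coveringNumber (⋃ t ∈ I, S t '' A) ε ≤ Θ.card * C.encard := by
  calc coveringNumber (⋃ t ∈ I, S t '' A) ε ≤ (⋃ τ ∈ Θ, S τ '' C).encard := by
        refine coveringNumber_le_encard
          (biUnion_mono hΘI fun τ _ => image_mono hCA) fun b hb => ?_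
        obtain ⟨t, ht, x, hx, rfl⟩ := by simpa only [mem_iUnion, mem_image, exists_prop] using hb
        obtain ⟨y, hy, hxy⟩ := by simpa only [mem_iUnion, exists_prop] using hC hx
        obtain ⟨τ, hτ, hclose⟩ := happrox t ht x hx y (hCA hy) (mem_ball.1 hxy)
        exact mem_biUnion (mem_biUnion hτ (mem_image_of_mem _ hy)) (mem_ball.2 hclose)
    _ ≤ ∑ τ ∈ Θ, (S τ '' C).encard := Θ.set_encard_biUnion_le _
    _ ≤ ∑ τ ∈ Θ, C.encard := Finset.sum_le_sum fun τ _ => encard_image_le _ _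
    _ = Θ.card * C.encard := by rw [Finset.sum_const, nsmul_eq_mul]

end CoveringNumber

lemma exists_finset_Icc_forall_abs_sub_le {T s : ℝ} (hT : 0 ≤ T) (hs : 0 < s) :
    ∃ Θ : Finset ℝ, ↑Θ ⊆ Icc 0 T ∧ Θ.card ≤ ⌊T / s⌋₊ + 1 ∧
      ∀ t ∈ Icc 0 T, ∃ τ ∈ Θ, |t - τ| ≤ s := by
  refine ⟨(Finset.range (⌊T / s⌋₊ + 1)).image fun i : ℕ => (i : ℝ) * s, ?_, ?_, ?_⟩
  · intro τ hτ
    obtain ⟨i, hi, rfl⟩ := by simpa only [Finset.coe_image, Finset.coe_range, mem_image,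
      mem_Iio] using hτ
    refine ⟨by positivity, ?_⟩
    calc (i : ℝ) * s ≤ ⌊T / s⌋₊ * s := by gcongr; exact_mod_cast Nat.lt_succ_iff.1 hi
      _ ≤ T / s * s := by gcongr; exact Nat.floor_le (by positivity)
      _ = T := div_mul_cancel₀ T hs.ne'
  · exact Finset.card_image_le.trans (Finset.card_range _).le
  · intro t ht
    have hfloor : (⌊t / s⌋₊ : ℝ) * s ≤ t :=
      (le_div_iff₀ hs).1 (Nat.floor_le (div_nonneg ht.1 hs.le))
    have hfloor' : t < (⌊t / s⌋₊ + 1 : ℝ) * s := (div_lt_iff₀ hs).1 (Nat.lt_floor_add_one _)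
    refine ⟨⌊t / s⌋₊ * s, Finset.mem_image_of_mem _ ?_, ?_⟩
    · exact Finset.mem_range.2 (Nat.lt_succ_of_le (Nat.floor_le_floor
        (div_le_div_of_nonneg_right ht.2 hs.le)))
    · rw [abs_of_nonneg (by linarith)]
      linarith

lemma natFloor_div_rpow_add_one_le {T K κ ε : ℝ} (hT : 0 ≤ T) (hK : 0 ≤ K) (hκ : 0 ≤ κ)
    (hε : 0 < ε) (hε1 : ε ≤ 1) :
    (⌊T / (ε / K) ^ κ⌋₊ + 1 : ℝ) ≤ (T * K ^ κ + 1) * (1 / ε) ^ κ := by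
  have hsplit : T / (ε / K) ^ κ = T * K ^ κ * (1 / ε) ^ κ := by
    have : 0 < ε ^ κ := by positivity
    rw [Real.div_rpow hε.le hK, Real.div_rpow zero_le_one hε.le, Real.one_rpow]
    field_simp
  have hone : 1 ≤ (1 / ε) ^ κ := Real.one_le_rpow (one_le_one_div hε hε1) hκ
  calc (⌊T / (ε / K) ^ κ⌋₊ + 1 : ℝ) ≤ T / (ε / K) ^ κ + 1 := by
        gcongr; exact Nat.floor_le (by positivity)
    _ ≤ (T * K ^ κ + 1) * (1 / ε) ^ κ := by
        rw [hsplit, add_mul, one_mul]; linarith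

section Suspension

variable {E : Type*} [PseudoMetricSpace E] {A : Set E} {T α M L : ℝ} {S : ℝ → E → E}

/-- The time step `s` is chosen so that `M s ^ α < ε / 2`, the space radius so that
`L δ ≤ ε / 2`. -/
lemma coveringNumber_biUnion_Icc_image_le (hT : 0 ≤ T) (hα : 0 < α) (hM : 0 ≤ M) (hL : 0 ≤ L)
    (hHolder : ∀ t ∈ Icc (0 : ℝ) T, ∀ s ∈ Icc (0 : ℝ) T, ∀ x ∈ A,
      dist (S t x) (S s x) ≤ M * |t - s| ^ α)
    (hLip : ∀ t ∈ Icc (0 : ℝ) T, ∀ x ∈ A, ∀ y ∈ A, dist (S t x) (S t y) ≤ L * dist x y)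
    {ε : ℝ} (hε : 0 < ε) :
    coveringNumber (⋃ t ∈ Icc 0 T, S t '' A) ε ≤
      (⌊T / (ε / (2 * (M + 1))) ^ (1 / α)⌋₊ + 1 : ℕ) * coveringNumber A ((2 * (L + 1))⁻¹ * ε) := by
  set s := (ε / (2 * (M + 1))) ^ (1 / α)
  set δ := (2 * (L + 1))⁻¹ * ε
  have hs : 0 < s := by positivity
  have hMs : M * s ^ α < ε / 2 := by
    rw [← Real.rpow_mul (by positivity), one_div_mul_cancel hα.ne', Real.rpow_one,
      mul_div_assoc', div_lt_div_iff₀ (by positivity) two_pos]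
    nlinarith
  have hLδ : L * δ ≤ ε / 2 := by
    rw [show L * δ = L / (L + 1) * (ε / 2) by simp only [δ]; field_simp]
    exact mul_le_of_le_one_left (by positivity) ((div_le_one (by positivity)).2 (by linarith))
  obtain ⟨Θ, hΘ, hΘcard, hΘnet⟩ := exists_finset_Icc_forall_abs_sub_le hT hs
  obtain ⟨C, hCA, hCcard, hC⟩ := exists_cover_encard_le_coveringNumber A (by positivity : 0 < δ)
  refine (coveringNumber_biUnion_image_le hΘ hCA hC fun t ht x hx y hy hxy => ?_).trans
    (mul_le_mul' (by exact_mod_cast hΘcard) hCcard)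
  obtain ⟨τ, hτ, htτ⟩ := hΘnet t ht
  refine ⟨τ, hτ, ?_⟩
  calc dist (S t x) (S τ y) ≤ dist (S t x) (S τ x) + dist (S τ x) (S τ y) := dist_triangle _ _ _
    _ ≤ M * |t - τ| ^ α + L * dist x y := add_le_add (hHolder t ht τ (hΘ hτ) x hx)
        (hLip τ (hΘ hτ) x hx y hy)
    _ ≤ M * s ^ α + L * δ := by gcongr
    _ < ε := by linarith

end Suspension

section FractalDim

variable {X Y : Type*} [PseudoMetricSpace X] [PseudoMetricSpace Y]

lemma tendsto_log_one_div_nhdsGT_zero :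
    Tendsto (fun ε : ℝ => Real.log (1 / ε)) (𝓝[>] 0) atTop := by
  simp only [one_div]
  exact Real.tendsto_log_atTop.comp tendsto_inv_nhdsGT_zero

lemma tendsto_div_log_one_div_nhdsGT_zero (a : ℝ) :
    Tendsto (fun ε : ℝ => a / Real.log (1 / ε)) (𝓝[>] 0) (𝓝 0) :=
  tendsto_const_nhds.div_atTop tendsto_log_one_div_nhdsGT_zero

/-- The ratio `log (1 / (c ε)) / log (1 / ε)` tends to `1`. -/
lemma limsup_coveringNumber_mul_le_fractalDim (A : Set Y) {c : ℝ} (hc : 0 < c) :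
    limsup (fun ε : ℝ => ENNReal.ofReal
      (Real.log ((coveringNumber A (c * ε)).toNat) / Real.log (1 / ε))) (𝓝[>] 0) ≤
      fractalDim A := by
  set F : ℝ → ℝ≥0∞ := fun δ =>
    ENNReal.ofReal (Real.log ((coveringNumber A δ).toNat) / Real.log (1 / δ))
  set r : ℝ → ℝ≥0∞ := fun ε => ENNReal.ofReal (Real.log (1 / (c * ε)) / Real.log (1 / ε))
  have hr : Tendsto r (𝓝[>] 0) (𝓝 1) := by
    have hlim := ENNReal.tendsto_ofReal
      ((tendsto_div_log_one_div_nhdsGT_zero (Real.log (1 / c))).add_const 1)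
    rw [zero_add, ENNReal.ofReal_one] at hlim
    refine hlim.congr' ?_
    filter_upwards [Ioo_mem_nhdsGT one_pos] with ε ⟨hε0, hε1⟩
    have hℓ : Real.log (1 / ε) ≠ 0 := (Real.log_pos (one_lt_one_div hε0 hε1)).ne'
    simp only [r]
    rw [← one_div_mul_one_div, Real.log_mul (by positivity) (by positivity), add_div, div_self hℓ]
  have hsplit : (fun ε => ENNReal.ofReal
      (Real.log ((coveringNumber A (c * ε)).toNat) / Real.log (1 / ε))) =ᶠ[𝓝[>] 0]
      r * (F ∘ (c * ·)) := by
    filter_upwards [Ioo_mem_nhdsGT one_pos,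
      eventually_nhdsGT_zero_mul_left hc (Ioo_mem_nhdsGT one_pos)] with ε ⟨hε0, hε1⟩ ⟨_, hcε1⟩
    have hℓ : 0 < Real.log (1 / ε) := Real.log_pos (one_lt_one_div hε0 hε1)
    have hℓc : 0 < Real.log (1 / (c * ε)) := Real.log_pos (one_lt_one_div (by positivity) hcε1)
    simp only [Pi.mul_apply, Function.comp_apply, r, F]
    rw [← ENNReal.ofReal_mul (by positivity)]
    congr 1
    field_simp
  calc _ = limsup (r * (F ∘ (c * ·))) (𝓝[>] 0) := limsup_congr hsplit
    _ ≤ limsup r (𝓝[>] 0) * limsup (F ∘ (c * ·)) (𝓝[>] 0) := by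
        refine ENNReal.limsup_mul_le' ?_ ?_ <;> simp [hr.limsup_eq]
    _ = limsup F (map (c * ·) (𝓝[>] 0)) := by rw [hr.limsup_eq, one_mul, limsup_comp]
    _ ≤ fractalDim A := limsup_le_limsup_of_le
        (tendsto_comap.mono_left (comap_mulLeft_nhdsGT_zero hc).ge)

lemma fractalDim_le_add_of_coveringNumber_le {B : Set Y} {A : Set X} {C₀ κ c : ℝ} (hC₀ : 0 < C₀)
    (hc : 0 < c) (hcov : ∀ᶠ ε in 𝓝[>] 0, ((coveringNumber B ε).toNat : ℝ) ≤
      C₀ * (1 / ε) ^ κ * (coveringNumber A (c * ε)).toNat) :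
    fractalDim B ≤ ENNReal.ofReal κ + fractalDim A := by
  set a : ℝ → ℝ≥0∞ := fun ε => ENNReal.ofReal (Real.log C₀ / Real.log (1 / ε))
  set b : ℝ → ℝ≥0∞ := fun ε =>
    ENNReal.ofReal (Real.log ((coveringNumber A (c * ε)).toNat) / Real.log (1 / ε))
  have ha : Tendsto a (𝓝[>] 0) (𝓝 0) := by
    rw [← ENNReal.ofReal_zero]
    exact ENNReal.tendsto_ofReal (tendsto_div_log_one_div_nhdsGT_zero (Real.log C₀))
  have hpointwise : ∀ᶠ ε in 𝓝[>] 0,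
      ENNReal.ofReal (Real.log ((coveringNumber B ε).toNat) / Real.log (1 / ε)) ≤
        ENNReal.ofReal κ + (a + b) ε := by
    filter_upwards [hcov, Ioo_mem_nhdsGT one_pos] with ε hbound ⟨hε0, hε1⟩
    set NB := (coveringNumber B ε).toNat
    set NA := (coveringNumber A (c * ε)).toNat
    have hℓ : 0 < Real.log (1 / ε) := Real.log_pos (one_lt_one_div hε0 hε1)
    rcases Nat.eq_zero_or_pos NB with hNB | hNB
    · simp [hNB]
    have hNA : 0 < NA := Nat.pos_of_ne_zero fun h => by
      have : (1 : ℝ) ≤ 0 := by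
        simpa [h] using (show (1 : ℝ) ≤ NB by exact_mod_cast hNB).trans hbound
      linarith
    have hlog : Real.log NB ≤ Real.log C₀ + κ * Real.log (1 / ε) + Real.log NA := by
      calc Real.log NB ≤ Real.log (C₀ * (1 / ε) ^ κ * NA) :=
            Real.log_le_log (by exact_mod_cast hNB) hbound
        _ = _ := by
            rw [Real.log_mul (by positivity) (by positivity), Real.log_mul hC₀.ne' (by positivity),
              Real.log_rpow (by positivity)]
    calc ENNReal.ofReal (Real.log NB / Real.log (1 / ε))
        ≤ ENNReal.ofReal
            (κ + (Real.log C₀ / Real.log (1 / ε) + Real.log NA / Real.log (1 / ε))) := by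
          refine ENNReal.ofReal_le_ofReal ?_
          rw [div_le_iff₀ hℓ]
          calc Real.log NB ≤ Real.log C₀ + κ * Real.log (1 / ε) + Real.log NA := hlog
            _ = _ := by field_simp; ring
      _ ≤ ENNReal.ofReal κ + (a + b) ε :=
          ENNReal.ofReal_add_le.trans (add_le_add le_rfl ENNReal.ofReal_add_le)
  calc fractalDim B ≤ limsup (fun ε => ENNReal.ofReal κ + (a + b) ε) (𝓝[>] 0) :=
        limsup_le_limsup hpointwise
    _ = ENNReal.ofReal κ + limsup b (𝓝[>] 0) := by
        rw [limsup_const_add _ _ _ (by isBoundedDefault) (by isBoundedDefault),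
          ENNReal.limsup_add_of_left_tendsto_zero ha]
    _ ≤ ENNReal.ofReal κ + fractalDim A :=
        add_le_add le_rfl (limsup_coveringNumber_mul_le_fractalDim A hc)

end FractalDim

/-- **Fractal dimension of the time-suspension (used in Theorems 2.15 and 2.18).**
Let `A ⊆ E` be totally bounded, `T > 0`, `α ∈ (0,1]`, `M ≥ 0`, `L ≥ 0`, and let
`S : [0,T] × E → E` be `α`-Hölder in time (with constant `M`) and `L`-Lipschitz in
space on `A`. Then `B = ⋃_{t ∈ [0,T]} S t '' A` is totally bounded and
`dim_f(B) ≤ 1/α + dim_f(A)`. -/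
theorem stmt_14 {E : Type*} [MetricSpace E] (A : Set E) (hA : TotallyBounded A)
    (T α M L : ℝ) (hT : 0 < T) (hα : α ∈ Set.Ioc (0 : ℝ) 1) (hM : 0 ≤ M) (hL : 0 ≤ L)
    (S : ℝ → E → E)
    (hHolder : ∀ t ∈ Set.Icc (0 : ℝ) T, ∀ s ∈ Set.Icc (0 : ℝ) T, ∀ x ∈ A,
      dist (S t x) (S s x) ≤ M * |t - s| ^ α)
    (hLip : ∀ t ∈ Set.Icc (0 : ℝ) T, ∀ x ∈ A, ∀ y ∈ A,
      dist (S t x) (S t y) ≤ L * dist x y) :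
    TotallyBounded (⋃ t ∈ Set.Icc (0 : ℝ) T, S t '' A) ∧
    fractalDim (⋃ t ∈ Set.Icc (0 : ℝ) T, S t '' A) ≤
      ENNReal.ofReal (1 / α) + fractalDim A := by
  set B := ⋃ t ∈ Icc (0 : ℝ) T, S t '' A
  set c : ℝ := (2 * (L + 1))⁻¹
  have hc : 0 < c := by positivity
  have hcov := fun ε (hε : 0 < ε) =>
    coveringNumber_biUnion_Icc_image_le hT.le hα.1 hM hL hHolder hLip hε
  have hA_ne_top : ∀ ε > 0, coveringNumber A (c * ε) ≠ ⊤ := fun ε hε =>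
    hA.coveringNumber_ne_top (by positivity)
  have hbound_ne_top : ∀ ε > 0, ∀ n : ℕ, (n : ℕ∞) * coveringNumber A (c * ε) ≠ ⊤ :=
    fun ε hε n => WithTop.mul_ne_top (ENat.natCast_ne_top n) (hA_ne_top ε hε)
  refine ⟨totallyBounded_of_coveringNumber_ne_top fun ε hε =>
    ne_top_of_le_ne_top (hbound_ne_top ε hε _) (hcov ε hε), ?_⟩
  refine fractalDim_le_add_of_coveringNumber_le (C₀ := T * (2 * (M + 1)) ^ (1 / α) + 1)
    (by positivity) hc ?_
  filter_upwards [Ioo_mem_nhdsGT one_pos] with ε ⟨hε0, hε1⟩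
  calc ((coveringNumber B ε).toNat : ℝ)
      ≤ ((⌊T / (ε / (2 * (M + 1))) ^ (1 / α)⌋₊ + 1) * (coveringNumber A (c * ε)).toNat : ℕ) := by
        exact_mod_cast (ENat.toNat_le_toNat (hcov ε hε0) (hbound_ne_top ε hε0 _)).trans_eq
          (by rw [ENat.toNat_mul, ENat.toNat_natCast])
    _ ≤ (T * (2 * (M + 1)) ^ (1 / α) + 1) * (1 / ε) ^ (1 / α) *
          (coveringNumber A (c * ε)).toNat := by
        push_cast
        gcongr
        exact natFloor_div_rpow_add_one_le hT.le (by positivity) (by have := hα.1; positivity)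
          hε0 hε1.le
end
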